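/- The estimator W_m = N⁻¹ ∑_{n=1}^N ∏_{j=1}^m f(Xₙ⁽ʲ⁾) is an unbiased estimator of the m-th crude moment of the conditional expectation: E[W_m] = E[(E[f∘X⁽¹⁾ | 𝓖])^m]. -/

import Mathlib

/-!
Averaging over the identically distributed samples reduces `E[W_m]` to `E[∏ⱼ f(X⁽ʲ⁾)]`, which
equals `E[∏ⱼ E[f∘X⁽ʲ⁾ | 𝓖]] = E[(E[f∘X⁽¹⁾ | 𝓖])^m]` by conditional independence and equal
conditional laws. As these hypotheses only cover bounded functions, the identity is first proved
for the truncations of `f` to `[-k, k]` and then passed to the limit `k → ∞` by dominated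
convergence: on the left the product is dominated by `∏ⱼ |f(X⁽ʲ⁾)|`, integrable by Hölder; on the
right the conditional expectations are dominated by `E[|f∘X⁽¹⁾| | 𝓖]`, which lies in `Lᵐ` by
conditional Jensen.
-/

open MeasureTheory ProbabilityTheory Filter
open scoped ENNReal Topology

def truncate (k : ℕ) (y : ℝ) : ℝ := max (-k) (min k y)

lemma continuous_truncate (k : ℕ) : Continuous (truncate k) := by
  unfold truncate; fun_prop

lemma abs_truncate_le (k : ℕ) (y : ℝ) : |truncate k y| ≤ k :=
  abs_le.mpr ⟨le_max_left _ _, max_le (by linarith [k.cast_nonneg (α := ℝ)]) (min_le_left _ _)⟩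

lemma abs_truncate_le_abs (k : ℕ) (y : ℝ) : |truncate k y| ≤ |y| := by
  have hk : (0 : ℝ) ≤ k := k.cast_nonneg
  refine abs_le.mpr ⟨le_max_of_le_right (le_min ?_ (neg_abs_le y)),
    max_le ?_ ((min_le_right _ _).trans (le_abs_self y))⟩ <;> linarith [abs_nonneg y]

lemma tendsto_truncate (y : ℝ) : Tendsto (fun k : ℕ => truncate k y) atTop (𝓝 y) := by
  refine tendsto_const_nhds.congr' ?_
  filter_upwards [eventually_ge_atTop ⌈|y|⌉₊] with k hk
  have hyk : |y| ≤ k := (Nat.le_ceil _).trans (by exact_mod_cast hk)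
  rw [truncate, min_eq_right (le_of_abs_le hyk), max_eq_right (neg_le_of_abs_le hyk)]

lemma integrable_prod_of_memLp {α ι 𝕜 : Type*} {_ : MeasurableSpace α} {μ : Measure α}
    [NormedCommRing 𝕜] [Fintype ι] [Nonempty ι] {g : ι → α → 𝕜}
    (hg : ∀ j, MemLp (g j) (Fintype.card ι) μ) : Integrable (fun ω => ∏ j, g j ω) μ := by
  have h := MemLp.prod' (s := Finset.univ) (p := fun _ => (Fintype.card ι : ℝ≥0∞))
    fun j _ => hg j
  rwa [Finset.sum_const, Finset.card_univ, nsmul_eq_mul,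
    ENNReal.mul_inv_cancel (by simp) (by simp), inv_one, memLp_one_iff_integrable] at h

section ConditionalExpectation

variable {Ω : Type*} {m m₀ : MeasurableSpace Ω} {P : Measure Ω}

theorem tendstoInMeasure_condExp_of_dominated_convergence {E : Type*} [NormedAddCommGroup E]
    [NormedSpace ℝ E] [CompleteSpace E] (hm : m ≤ m₀) [SigmaFinite (P.trim hm)]
    {fs : ℕ → Ω → E} {f : Ω → E} (bound : Ω → ℝ)
    (hfs_meas : ∀ n, AEStronglyMeasurable (fs n) P) (h_int_bound : Integrable bound P)
    (hfs_bound : ∀ n, ∀ᵐ ω ∂P, ‖fs n ω‖ ≤ bound ω)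
    (hfs : ∀ᵐ ω ∂P, Tendsto (fun n => fs n ω) atTop (𝓝 (f ω))) :
    TendstoInMeasure P (fun n => P[fs n|m]) atTop (P[f|m]) :=
  (tendstoInMeasure_of_tendsto_Lp (tendsto_condExpL1_of_dominated_convergence hm bound hfs_meas
      h_int_bound hfs_bound hfs)).congr
    (fun _ => (condExp_ae_eq_condExpL1 hm _).symm) (condExp_ae_eq_condExpL1 hm _).symm

theorem tendsto_integral_condExp_pow_of_dominated_convergence [IsFiniteMeasure P] (hm : m ≤ m₀)
    {n : ℕ} (hn : n ≠ 0) {fs : ℕ → Ω → ℝ} {f : Ω → ℝ} {bound : Ω → ℝ}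
    (hfs_meas : ∀ k, AEStronglyMeasurable (fs k) P) (h_bound : MemLp bound n P)
    (hfs_bound : ∀ k, ∀ᵐ ω ∂P, ‖fs k ω‖ ≤ bound ω)
    (hfs : ∀ᵐ ω ∂P, Tendsto (fun k => fs k ω) atTop (𝓝 (f ω))) :
    Tendsto (fun k => ∫ ω, (P[fs k|m] ω) ^ n ∂P) atTop (𝓝 (∫ ω, (P[f|m] ω) ^ n ∂P)) := by
  have hn1 : (1 : ℝ≥0∞) ≤ n := by exact_mod_cast Nat.one_le_iff_ne_zero.mpr hn
  have h_int_bound : Integrable bound P := h_bound.integrable hn1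
  have hconv := tendstoInMeasure_condExp_of_dominated_convergence hm bound hfs_meas h_int_bound
    hfs_bound hfs
  have hcond_bound (k : ℕ) : ∀ᵐ ω ∂P, ‖(P[fs k|m] ω) ^ n‖ ≤ ‖P[bound|m] ω‖ ^ n := by
    have hmono : P[(‖fs k ·‖)|m] ≤ᵐ[P] P[bound|m] :=
      condExp_mono (h_int_bound.mono' (hfs_meas k) (hfs_bound k)).norm h_int_bound
        (hfs_bound k)
    filter_upwards [norm_condExp_le (fs k), hmono] with ω h₁ h₂
    rw [norm_pow]
    exact pow_le_pow_left₀ (norm_nonneg _) (h₁.trans (h₂.trans (le_abs_self _))) n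
  -- Every subsequence has a further subsequence along which the conditional expectations
  -- converge a.e., and there dominated convergence applies.
  refine tendsto_of_subseq_tendsto fun ns hns => ?_
  obtain ⟨ms, -, hms⟩ := (hconv.comp hns).exists_seq_tendsto_ae
  exact ⟨ms, tendsto_integral_of_dominated_convergence _
    (fun _ => (stronglyMeasurable_condExp.mono hm).aestronglyMeasurable.pow n)
    ((h_bound.condExp hn1).integrable_norm_pow hn) (fun _ => hcond_bound _)
    (hms.mono fun _ hω => hω.pow n)⟩

theorem integral_prod_eq_integral_condExp_pow {F : Type*} (hm : m ≤ m₀) [SigmaFinite (P.trim hm)]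
    {n : ℕ} {X : Fin n → Ω → F} {g : F → ℝ} (j₀ : Fin n)
    (hprod : P[(fun ω => ∏ j, g (X j ω))|m] =ᵐ[P] fun ω => ∏ j, P[(fun ω' => g (X j ω'))|m] ω)
    (hsame : ∀ j, P[(fun ω => g (X j ω))|m] =ᵐ[P] P[(fun ω => g (X j₀ ω))|m]) :
    ∫ ω, ∏ j, g (X j ω) ∂P = ∫ ω, (P[(fun ω' => g (X j₀ ω'))|m] ω) ^ n ∂P := by
  rw [← integral_condExp hm]
  refine integral_congr_ae ?_
  filter_upwards [hprod, ae_all_iff.mpr hsame] with ω hω hω'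
  simp [hω, hω']

theorem identDistrib_of_condExp_comp_ae_eq {F : Type*} [MeasurableSpace F] [IsFiniteMeasure P]
    (hm : m ≤ m₀) {Z Z' : Ω → F} (hZ : Measurable Z) (hZ' : Measurable Z')
    (h : ∀ g : F → ℝ, Measurable g → (∃ C, ∀ x, |g x| ≤ C) →
      P[(fun ω => g (Z ω))|m] =ᵐ[P] P[(fun ω => g (Z' ω))|m]) :
    IdentDistrib Z Z' P P := by
  refine ⟨hZ.aemeasurable, hZ'.aemeasurable, Measure.ext fun s hs => ?_⟩
  have hind {W : Ω → F} (hW : Measurable W) : ∫ ω, s.indicator 1 (W ω) ∂P = (P.map W).real s := by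
    rw [← integral_map hW.aemeasurable (stronglyMeasurable_one.indicator hs).aestronglyMeasurable,
      integral_indicator_one hs]
  have hint := integral_congr_ae <| h (s.indicator 1) (measurable_one.indicator hs)
    ⟨1, fun x => by by_cases hx : x ∈ s <;> simp [hx]⟩
  rwa [integral_condExp hm, integral_condExp hm, hind hZ, hind hZ',
    measureReal_eq_measureReal_iff] at hint

end ConditionalExpectation

section FiniteFamily

variable {Ω ι : Type*} {_ : MeasurableSpace Ω} {P : Measure Ω} [Fintype ι] [Nonempty ι]

theorem integral_average_of_identDistrib {Z : ι → Ω → ℝ} {Z₀ : Ω → ℝ}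
    (hZ : ∀ n, IdentDistrib (Z n) Z₀ P P) (hZ₀ : Integrable Z₀ P) :
    ∫ ω, (Fintype.card ι : ℝ)⁻¹ * ∑ n, Z n ω ∂P = ∫ ω, Z₀ ω ∂P := by
  rw [integral_const_mul, integral_finsetSum _ fun n _ => (hZ n).integrable_iff.mpr hZ₀]
  simp_rw [(hZ _).integral_eq]
  rw [Finset.sum_const, Finset.card_univ, nsmul_eq_mul, ← mul_assoc,
    inv_mul_cancel₀ (by simp), one_mul]

theorem tendsto_integral_prod_truncate {Z : ι → Ω → ℝ}
    (hZ : ∀ j, MemLp (Z j) (Fintype.card ι) P) :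
    Tendsto (fun k => ∫ ω, ∏ j, truncate k (Z j ω) ∂P) atTop (𝓝 (∫ ω, ∏ j, Z j ω ∂P)) := by
  refine tendsto_integral_of_dominated_convergence (fun ω => ∏ j, |Z j ω|)
    (fun k => Finset.aestronglyMeasurable_fun_prod _ fun j _ =>
      (continuous_truncate k).comp_aestronglyMeasurable (hZ j).1)
    (integrable_prod_of_memLp fun j => (hZ j).abs) (fun k => ae_of_all _ fun ω => ?_)
    (ae_of_all _ fun ω => tendsto_finsetProd _ fun j _ => tendsto_truncate (Z j ω))
  rw [Real.norm_eq_abs, Finset.abs_prod]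
  exact Finset.prod_le_prod (fun j _ => abs_nonneg _) fun j _ => abs_truncate_le_abs k _

end FiniteFamily

/-- `W_m = N⁻¹ ∑ₙ ∏ⱼ f(Xₙ⁽ʲ⁾)` is an unbiased estimator of the `m`-th crude moment
of the conditional expectation: `E[W_m] = E[(E[f∘X⁽¹⁾ | 𝓖])^m]`. -/
theorem estimator_Wm_unbiased
    {Ω E F : Type*} (𝓖 : MeasurableSpace Ω)
    [MeasurableSpace Ω] [MeasurableSpace E] [MeasurableSpace F]
    (P : Measure Ω) [IsProbabilityMeasure P]
    (Y : Ω → E) (m : ℕ) (hm : 2 ≤ m) (X : Fin m → Ω → F) (f : F → ℝ)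
    (hY : Measurable Y) (hX : ∀ j, Measurable (X j)) (hf : Measurable f)
    (h𝓖 : 𝓖 = MeasurableSpace.comap Y inferInstance)
    -- mutual conditional independence of `X⁽¹⁾, …, X⁽ᵐ⁾` given `𝓖 = σ(Y)`
    (hCondIndep : ∀ g : Fin m → F → ℝ, (∀ j, Measurable (g j)) →
      (∀ j, ∃ C, ∀ x, |g j x| ≤ C) →
      P[(fun ω => ∏ j, g j (X j ω))|𝓖]
        =ᵐ[P] fun ω => ∏ j, ((P[(fun ω' => g j (X j ω'))|𝓖]) ω))
    -- the `X⁽ʲ⁾` all have the same conditional distribution given `𝓖`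
    (hSameCondDist : ∀ g : F → ℝ, Measurable g → (∃ C, ∀ x, |g x| ≤ C) → ∀ j k,
      P[(fun ω => g (X j ω))|𝓖] =ᵐ[P] P[(fun ω => g (X k ω))|𝓖])
    (hLm : MemLp (fun ω => f (X ⟨0, by omega⟩ ω)) (m : ℝ≥0∞) P)
    (N : ℕ) (hN : 0 < N)
    -- i.i.d. sample tuples `(Yₙ, Xₙ⁽¹⁾, …, Xₙ⁽ᵐ⁾)` distributed as `(Y, X⁽¹⁾, …, X⁽ᵐ⁾)`
    (Ys : Fin N → Ω → E) (Xs : Fin N → Fin m → Ω → F)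
    (hYs : ∀ n, Measurable (Ys n)) (hXs : ∀ n j, Measurable (Xs n j))
    (hIdent : ∀ n, Measure.map (fun ω => (Ys n ω, fun j => Xs n j ω)) P
        = Measure.map (fun ω => (Y ω, fun j => X j ω)) P)
    :
    ∫ ω, (N : ℝ)⁻¹ * ∑ n, ∏ j, f (Xs n j ω) ∂P
      = ∫ ω, ((P[(fun ω' => f (X ⟨0, by omega⟩ ω'))|𝓖]) ω) ^ m ∂P := by
  have hle : 𝓖 ≤ ‹MeasurableSpace Ω› := h𝓖 ▸ hY.comap_le
  have : NeZero m := ⟨by omega⟩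
  have : NeZero N := ⟨hN.ne'⟩
  set j₀ : Fin m := ⟨0, by omega⟩
  have hlaw (j : Fin m) : IdentDistrib (X j) (X j₀) P P :=
    identDistrib_of_condExp_comp_ae_eq hle (hX j) (hX j₀) fun g hg hgC =>
      hSameCondDist g hg hgC j j₀
  have hfX (j : Fin m) : MemLp (fun ω => f (X j ω)) (Fintype.card (Fin m)) P := by
    simpa [Function.comp_def] using ((hlaw j).comp hf).memLp_iff.mpr hLm
  have hsample (n : Fin N) :
      IdentDistrib (fun ω => ∏ j, f (Xs n j ω)) (fun ω => ∏ j, f (X j ω)) P P :=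
    IdentDistrib.comp (u := fun p : E × (Fin m → F) => ∏ j, f (p.2 j))
      ⟨by fun_prop, by fun_prop, hIdent n⟩ (by fun_prop)
  have htruncated (k : ℕ) : ∫ ω, ∏ j, truncate k (f (X j ω)) ∂P
      = ∫ ω, (P[(fun ω' => truncate k (f (X j₀ ω')))|𝓖] ω) ^ m ∂P := by
    have hmeas : Measurable (truncate k ∘ f) := (continuous_truncate k).measurable.comp hf
    have hbdd : ∃ C, ∀ x, |(truncate k ∘ f) x| ≤ C := ⟨k, fun x => abs_truncate_le k (f x)⟩
    exact integral_prod_eq_integral_condExp_pow hle j₀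
      (hCondIndep _ (fun _ => hmeas) fun _ => hbdd) fun j => hSameCondDist _ hmeas hbdd j j₀
  have hlim := tendsto_integral_condExp_pow_of_dominated_convergence hle (NeZero.ne m)
    (fun k => ((continuous_truncate k).comp_aestronglyMeasurable (hfX j₀).1)) hLm.abs
    (fun k => ae_of_all _ fun ω => abs_truncate_le_abs k _)
    (ae_of_all _ fun ω => tendsto_truncate (f (X j₀ ω)))
  simp only [← htruncated] at hlim
  simpa using (integral_average_of_identDistrib hsample (integrable_prod_of_memLp hfX)).trans
    (tendsto_nhds_unique (tendsto_integral_prod_truncate hfX) hlim)
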